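/- The maps f ↦ R_f (where R_f(r) = {x | f(x) ≤ r}) and R ↦ f_R (where f_R(x) = inf{r | x ∈ R(r)}) give a bijection between uniformly continuous functions X → [0,1] with modulus ε and ε-predicates on X. This bijection is natural: for any uniformly continuous g : Y → X, R_{f∘g}(r) = g⁻¹(R_f(r)) for all r, and f_{g*R} = f_R ∘ g where (g*R)(r) = g⁻¹(R(r)). -/

import Mathlib

open Set

/-- A pseudometric space of diameter ≤ 1. -/
structure PMet where
  carrier : Type
  d : carrier → carrier → ℝ
  d_self : ∀ x, d x x = 0
  d_symm : ∀ x y, d x y = d y x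
  d_triangle : ∀ x y z, d x z ≤ d x y + d y z
  d_nonneg : ∀ x y, 0 ≤ d x y
  d_le_one : ∀ x y, d x y ≤ 1

/-- Uniform continuity of a map between diameter-≤1 pseudometric spaces. -/
def UnifCont (X Y : PMet) (f : X.carrier → Y.carrier) : Prop :=
  ∀ e : ℝ, 0 < e → ∃ δ : ℝ, 0 < δ ∧ ∀ x y, X.d x y < δ → Y.d (f x) (f y) < e

/-- A modulus of uniform continuity: increasing, infima-preserving, fixing 0,
    mapping [0,1] into [0,1]. -/
def IsModulus (μ : ℝ → ℝ) : Prop :=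
  μ 0 = 0 ∧
  (∀ r ∈ Icc (0:ℝ) 1, μ r ∈ Icc (0:ℝ) 1) ∧
  (∀ r s, r ∈ Icc (0:ℝ) 1 → s ∈ Icc (0:ℝ) 1 → r ≤ s → μ r ≤ μ s) ∧
  (∀ S : Set ℝ, S.Nonempty → S ⊆ Icc (0:ℝ) 1 → μ (sInf S) = sInf (μ '' S))

/-- `f` is uniformly continuous with modulus `μ`. -/
def HasModulus (X Y : PMet) (f : X.carrier → Y.carrier) (μ : ℝ → ℝ) : Prop :=
  ∀ x y, Y.d (f x) (f y) ≤ μ (X.d x y)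

/-- An ε-predicate on `X`: a monotone family of subsets, preserving nonempty
    infima as intersections, satisfying the ε-continuity condition
    (with truncated addition on [0,1]). -/
def IsPred (X : PMet) (μ : ℝ → ℝ) (R : ℝ → Set X.carrier) : Prop :=
  (∀ r s, r ∈ Icc (0:ℝ) 1 → s ∈ Icc (0:ℝ) 1 → r ≤ s → R r ⊆ R s) ∧
  (∀ S : Set ℝ, S.Nonempty → S ⊆ Icc (0:ℝ) 1 → R (sInf S) = ⋂ r ∈ S, R r) ∧
  (∀ r s, r ∈ Icc (0:ℝ) 1 → s ∈ Icc (0:ℝ) 1 → ∀ x y, x ∈ R r → X.d x y ≤ s →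
     y ∈ R (min (r + μ s) 1))

/-- The product pseudometric space with the max metric. -/
def prodPMet (Y Z : PMet) : PMet where
  carrier := Y.carrier × Z.carrier
  d p q := max (Y.d p.1 q.1) (Z.d p.2 q.2)
  d_self p := by simp [Y.d_self, Z.d_self]
  d_symm p q := by (try dsimp only); rw [Y.d_symm, Z.d_symm]
  d_triangle p q r := max_le
    (le_trans (Y.d_triangle _ _ _) (add_le_add (le_max_left _ _) (le_max_left _ _)))
    (le_trans (Z.d_triangle _ _ _) (add_le_add (le_max_right _ _) (le_max_right _ _)))
  d_nonneg p q := le_trans (Y.d_nonneg _ _) (le_max_left _ _)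
  d_le_one p q := max_le (Y.d_le_one _ _) (Z.d_le_one _ _)

/-- f ↦ R_f and R ↦ f_R are mutually inverse, natural in X. -/
theorem predicate_classifier_bijection (X Y : PMet) (ε : ℝ → ℝ) (hε : IsModulus ε) :
    (∀ f : X.carrier → ℝ, (∀ x, f x ∈ Icc (0:ℝ) 1) →
      (∀ x y, |f x - f y| ≤ ε (X.d x y)) →
      IsPred X ε (fun r => {x | f x ≤ r}) ∧
      (∀ x, sInf {r | r ∈ Icc (0:ℝ) 1 ∧ f x ≤ r} = f x)) ∧
    (∀ R : ℝ → Set X.carrier, IsPred X ε R → R 1 = Set.univ →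
      (∀ x, sInf {r | r ∈ Icc (0:ℝ) 1 ∧ x ∈ R r} ∈ Icc (0:ℝ) 1) ∧
      (∀ x y, |sInf {r | r ∈ Icc (0:ℝ) 1 ∧ x ∈ R r} -
                sInf {r | r ∈ Icc (0:ℝ) 1 ∧ y ∈ R r}| ≤ ε (X.d x y)) ∧
      (∀ r ∈ Icc (0:ℝ) 1,
        R r = {x | sInf {s | s ∈ Icc (0:ℝ) 1 ∧ x ∈ R s} ≤ r})) ∧
    (∀ (g : Y.carrier → X.carrier) (f : X.carrier → ℝ) (r : ℝ),
      {y | (f ∘ g) y ≤ r} = g ⁻¹' {x | f x ≤ r}) ∧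
    (∀ (g : Y.carrier → X.carrier) (R : ℝ → Set X.carrier) (y : Y.carrier),
      sInf {r | r ∈ Icc (0:ℝ) 1 ∧ y ∈ g ⁻¹' (R r)} =
        sInf {r | r ∈ Icc (0:ℝ) 1 ∧ g y ∈ R r}) := by

  obtain ⟨hε0, hεIcc, hεmono, _⟩ := hε
  refine ⟨?_, ?_, ?_, ?_⟩
  · intro f hf hfe
    constructor
    · refine ⟨?_, ?_, ?_⟩
      · intro r s _ _ hrs x hx
        exact le_trans hx hrs
      · intro S hS hSsub
        ext x
        simp only [Set.mem_setOf_eq, Set.mem_iInter]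
        constructor
        · intro hx r hr
          exact hx.trans (csInf_le ⟨0, fun t ht => (hSsub ht).1⟩ hr)
        · intro h
          exact le_csInf hS h
      · intro r s hr hs x y hx hd
        simp only [Set.mem_setOf_eq] at hx ⊢
        have h1 : f y - f x ≤ ε (X.d x y) := by
          have := hfe y x
          rw [X.d_symm] at this
          exact (abs_le.mp this).2
        have h2 : ε (X.d x y) ≤ ε s :=
          hεmono _ _ ⟨X.d_nonneg x y, X.d_le_one x y⟩ hs hd
        exact le_min (by linarith) (hf y).2
    · intro x
      refine le_antisymm (csInf_le ⟨0, fun t ht => ht.1.1⟩ ⟨hf x, le_refl _⟩)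
        (le_csInf ⟨f x, hf x, le_refl _⟩ fun t ht => ht.2)
  · intro R hR hR1
    obtain ⟨hmono, hinf, hcont⟩ := hR
    set F := fun x => sInf {r | r ∈ Icc (0:ℝ) 1 ∧ x ∈ R r} with hF
    have hne : ∀ x, {r | r ∈ Icc (0:ℝ) 1 ∧ x ∈ R r}.Nonempty := by
      intro x; exact ⟨1, ⟨zero_le_one, le_refl _⟩, by rw [hR1]; trivial⟩
    have hbdd : ∀ x, BddBelow {r | r ∈ Icc (0:ℝ) 1 ∧ x ∈ R r} :=
      fun x => ⟨0, fun t ht => ht.1.1⟩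
    have hIcc : ∀ x, F x ∈ Icc (0:ℝ) 1 := by
      intro x
      exact ⟨le_csInf (hne x) fun t ht => ht.1.1,
        csInf_le (hbdd x) ⟨⟨zero_le_one, le_refl _⟩, by rw [hR1]; trivial⟩⟩
    have hmem : ∀ x, x ∈ R (F x) := by
      intro x
      have := hinf {r | r ∈ Icc (0:ℝ) 1 ∧ x ∈ R r} (hne x) (fun t ht => ht.1)
      rw [hF]
      simp only []
      rw [this]
      simp only [Set.mem_iInter]
      exact fun r hr => hr.2
    have key : ∀ x y, F y ≤ F x + ε (X.d x y) := by
      intro x y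
      have hd : X.d x y ∈ Icc (0:ℝ) 1 := ⟨X.d_nonneg x y, X.d_le_one x y⟩
      have hy := hcont (F x) (X.d x y) (hIcc x) hd x y (hmem x) (le_refl _)
      have hεd : ε (X.d x y) ∈ Icc (0:ℝ) 1 := hεIcc _ hd
      have hm : min (F x + ε (X.d x y)) 1 ∈ Icc (0:ℝ) 1 :=
        ⟨le_min (by have := (hIcc x).1; linarith [hεd.1]) zero_le_one,
         min_le_right _ _⟩
      have : F y ≤ min (F x + ε (X.d x y)) 1 := csInf_le (hbdd y) ⟨hm, hy⟩
      exact this.trans (min_le_left _ _)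
    refine ⟨hIcc, ?_, ?_⟩
    · intro x y
      rw [abs_sub_le_iff]
      constructor
      · have := key y x; rw [X.d_symm] at this; linarith
      · have := key x y; linarith
    · intro r hr
      ext x
      simp only [Set.mem_setOf_eq]
      constructor
      · intro hx
        exact csInf_le (hbdd x) ⟨hr, hx⟩
      · intro hx
        exact hmono (F x) r (hIcc x) hr hx (hmem x)
  · intro g f r; rfl
  · intro g R y; rfl
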